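/- ∑_{n=1}^∞ sin(n)cos(n)/n = ∑_{n=1}^∞ sin²(n)cos(n)/n² = ∑_{n=1}^∞ sin³(n)cos(n)/n³ = (π − 2)/4. -/

import Mathlib

open Real Filter Finset Topology

lemma bern2 (x : ℝ) : (Polynomial.map (algebraMap ℚ ℝ) (Polynomial.bernoulli 2)).eval x
    = x^2 - x + 1/6 := by
  simp [Polynomial.bernoulli, Finset.sum_range_succ, bernoulli_zero, bernoulli_one,
    bernoulli_eq_bernoulli'_of_ne_one, bernoulli'_two, bernoulli'_three]
  ring

lemma bern3 (x : ℝ) : (Polynomial.map (algebraMap ℚ ℝ) (Polynomial.bernoulli 3)).eval x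
    = x^3 - (3/2)*x^2 + x/2 := by
  simp [Polynomial.bernoulli, Finset.sum_range_succ, bernoulli_zero, bernoulli_one,
    bernoulli_eq_bernoulli'_of_ne_one, bernoulli'_two, bernoulli'_three]
  ring

lemma hs2 : HasSum (fun n : ℕ => Real.sin n ^ 2 * Real.cos n / (n:ℝ) ^ 2) ((π - 2) / 4) := by
  have pi_pos := Real.pi_pos
  have h1 := hasSum_one_div_nat_pow_mul_cos one_ne_zero
    (x := 1/(2*π)) ⟨by positivity, by rw [div_le_one (by positivity)]; nlinarith [Real.pi_gt_three]⟩
  have h3 := hasSum_one_div_nat_pow_mul_cos one_ne_zero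
    (x := 3/(2*π)) ⟨by positivity, by rw [div_le_one (by positivity)]; nlinarith [Real.pi_gt_three]⟩
  rw [show 2*1 = 2 from rfl, bern2] at h1 h3
  have h := (h1.sub h3).div_const 4
  convert h using 2 with n
  · rfl
  · rw [show 2*π*(n:ℝ)*(1/(2*π)) = (n:ℝ) by field_simp,
      show 2*π*(n:ℝ)*(3/(2*π)) = 3*(n:ℝ) by field_simp,
      Real.cos_three_mul, Real.sin_sq]
    ring
  · norm_num [Nat.factorial]
    field_simp
    ring

lemma hs3 : HasSum (fun n : ℕ => Real.sin n ^ 3 * Real.cos n / (n:ℝ) ^ 3) ((π - 2) / 4) := by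
  have pi_pos := Real.pi_pos
  have h2 := hasSum_one_div_nat_pow_mul_sin one_ne_zero
    (x := 1/π) ⟨by positivity, by rw [div_le_one (by positivity)]; nlinarith [Real.pi_gt_three]⟩
  have h4 := hasSum_one_div_nat_pow_mul_sin one_ne_zero
    (x := 2/π) ⟨by positivity, by rw [div_le_one (by positivity)]; nlinarith [Real.pi_gt_three]⟩
  rw [show 2*1+1 = 3 from rfl, bern3] at h2 h4
  have h := ((h2.mul_right 2).sub h4).div_const 8
  convert h using 1
  · rfl
  · funext n
    rw [show 2*π*(n:ℝ)*(1/π) = 2*(n:ℝ) by field_simp,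
      show 2*π*(n:ℝ)*(2/π) = 2*(2*(n:ℝ)) by field_simp]
    simp only [Real.sin_two_mul, Real.cos_two_mul]
    rw [show Real.cos (n:ℝ)^2 = 1 - Real.sin (n:ℝ)^2 by nlinarith [Real.sin_sq_add_cos_sq (n:ℝ)]]
    ring
  · norm_num [Nat.factorial]
    field_simp
    ring

lemma sum_Icc_eq_range {M : Type*} [AddCommMonoid M] (g : ℕ → M) (h0 : g 0 = 0) (N : ℕ) :
    ∑ n ∈ Finset.Icc 1 N, g n = ∑ n ∈ Finset.range (N+1), g n := by
  rw [Finset.range_eq_Ico, Finset.Ico_add_one_right_eq_Icc, Finset.Icc_eq_cons_Ioc (Nat.zero_le N),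
    Finset.sum_cons, h0, zero_add, ← Finset.Icc_add_one_left_eq_Ioc, zero_add]

lemma tendsto_Icc_of_hasSum {g : ℕ → ℝ} (h0 : g 0 = 0) {a : ℝ} (h : HasSum g a) :
    Tendsto (fun N : ℕ => ∑ n ∈ Finset.Icc 1 N, g n) atTop (𝓝 a) := by
  have h2 : Tendsto (fun N : ℕ => ∑ n ∈ Finset.range (N+1), g n) atTop (𝓝 a) :=
    h.tendsto_sum_nat.comp (tendsto_add_atTop_nat 1)
  simpa only [sum_Icc_eq_range g h0] using h2

lemma part1 : Tendsto (fun N : ℕ => ∑ n ∈ Finset.Icc 1 N, Real.sin n * Real.cos n / n)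
    atTop (𝓝 ((π - 2) / 4)) := by
  have pi_pos := Real.pi_pos
  set z₀ : ℂ := Complex.exp (2 * Complex.I) with hz₀
  have habs : ‖z₀‖ = 1 := by
    rw [hz₀, Complex.norm_exp]; simp
  have hz_ne : z₀ ≠ 1 := by
    rw [hz₀, Ne, Complex.exp_eq_one_iff]
    rintro ⟨n, hn⟩
    have h2 : (2 : ℂ) * Complex.I = ((2 * π * n : ℝ) : ℂ) * Complex.I := by
      rw [hn]; push_cast; ring
    have h3 : (2 : ℝ) = 2 * π * n := by
      have := mul_right_cancel₀ Complex.I_ne_zero h2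
      exact_mod_cast this
    rcases le_or_gt (n : ℝ) 0 with h | h
    · nlinarith
    · have : (1 : ℝ) ≤ (n : ℝ) := by exact_mod_cast (by exact_mod_cast h : 0 < n)
      nlinarith [Real.pi_gt_three]
  -- geometric sums bounded
  have hd_ne : z₀ - 1 ≠ 0 := sub_ne_zero.mpr hz_ne
  have hb : ∀ n : ℕ, ‖∑ i ∈ Finset.range n, z₀ ^ (i + 1)‖ ≤ 2 / ‖z₀ - 1‖ := by
    intro n
    have : ∑ i ∈ Finset.range n, z₀ ^ (i + 1) = z₀ * ((z₀ ^ n - 1) / (z₀ - 1)) := by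
      rw [← geom_sum_eq hz_ne]
      rw [Finset.mul_sum]
      exact Finset.sum_congr rfl fun i _ => by ring
    rw [this, norm_mul, norm_div]
    have h1 : ‖z₀ ^ n - 1‖ ≤ 2 := by
      calc ‖z₀ ^ n - 1‖ ≤ ‖z₀ ^ n‖ + ‖(1:ℂ)‖ := norm_sub_le _ _
      _ ≤ 2 := by
        rw [norm_pow]
        norm_num [habs]
    have h0 : (0:ℝ) < ‖z₀ - 1‖ := norm_pos_iff.mpr hd_ne
    rw [show ‖z₀‖ = 1 by norm_num [habs], one_mul]
    gcongr
  -- Dirichlet's test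
  have hfa : Antitone (fun n : ℕ => 1 / ((n:ℝ) + 1)) := by
    intro a b hab
    apply div_le_div_of_nonneg_left one_pos.le (by positivity)
    exact_mod_cast Nat.succ_le_succ hab
  have hf0 : Tendsto (fun n : ℕ => 1 / ((n:ℝ) + 1)) atTop (𝓝 0) :=
    tendsto_one_div_add_atTop_nhds_zero_nat
  have cauchy := hfa.cauchySeq_series_mul_of_tendsto_zero_of_bounded hf0
    (z := fun i => z₀ ^ (i + 1)) hb
  obtain ⟨l, hl⟩ := cauchySeq_tendsto_of_complete cauchy
  set F : ℕ → ℂ := fun n => z₀ ^ n / n with hF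
  have hsmul : ∀ i : ℕ, (1 / ((i:ℝ) + 1)) • z₀ ^ (i + 1) = F (i + 1) := by
    intro i
    rw [hF]
    simp only [Complex.real_smul]
    push_cast
    ring
  have hl2 : Tendsto (fun n : ℕ => ∑ i ∈ Finset.range n, F i) atTop (𝓝 l) := by
    rw [← tendsto_add_atTop_iff_nat 1]
    convert hl using 2 with n
    rw [Finset.sum_range_succ']
    simp only [hsmul]
    simp [hF]
  -- Abel's limit theorem identifies l
  have hre : z₀.re = Real.cos 2 := by
    rw [hz₀, Complex.exp_re]
    simp
  have him0 : z₀.im = Real.sin 2 := by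
    rw [hz₀, Complex.exp_im]
    simp
  have hcos2 : Real.cos 2 ≤ 0 :=
    Real.cos_nonpos_of_pi_div_two_le_of_le (by linarith [Real.pi_le_four])
      (by linarith [Real.pi_gt_three])
  have hslit : (1 - z₀) ∈ Complex.slitPlane := by
    rw [Complex.mem_slitPlane_iff]
    left
    simp only [Complex.sub_re, Complex.one_re, hre]
    linarith
  have hA' : Tendsto (fun x : ℝ => ∑' n, F n * (x:ℂ) ^ n) (𝓝[<] (1:ℝ)) (𝓝 l) := by
    have := Complex.tendsto_tsum_powerSeries_nhdsWithin_lt hl2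
    rwa [tendsto_map'_iff] at this
  have hB : Tendsto (fun x : ℝ => -Complex.log (1 - (x:ℂ) * z₀)) (𝓝[<] (1:ℝ))
      (𝓝 (-Complex.log (1 - z₀))) := by
    apply Tendsto.neg
    apply (continuousAt_clog hslit).tendsto.comp
    have h1 : Tendsto (fun x : ℝ => (x:ℂ)) (𝓝[<] (1:ℝ)) (𝓝 (1:ℂ)) :=
      (Complex.continuous_ofReal.tendsto 1).mono_left nhdsWithin_le_nhds
    simpa using tendsto_const_nhds.sub (h1.mul tendsto_const_nhds)
  have hEq : ∀ᶠ (x : ℝ) in 𝓝[<] (1:ℝ), ∑' n, F n * (x:ℂ) ^ n = -Complex.log (1 - (x:ℂ) * z₀) := by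
    filter_upwards [Ioo_mem_nhdsLT (show (0:ℝ) < 1 by norm_num)] with x hx
    have hnorm : ‖(x:ℂ) * z₀‖ < 1 := by
      rw [norm_mul]
      simp only [habs, mul_one, Complex.norm_real, Real.norm_eq_abs, abs_of_pos hx.1]
      exact hx.2
    have hs := Complex.hasSum_taylorSeries_neg_log hnorm
    rw [← hs.tsum_eq]
    congr 1
    funext n
    rw [hF, mul_pow]
    ring
  haveI : (𝓝[<] (1:ℝ)).NeBot := nhdsLT_neBot 1
  have hlval : l = -Complex.log (1 - z₀) := tendsto_nhds_unique (hA'.congr' hEq) hB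
  -- compute the argument of 1 - z₀
  have hsin1 : 0 < Real.sin 1 :=
    Real.sin_pos_of_pos_of_lt_pi one_pos (by linarith [Real.pi_gt_three])
  have harg : Complex.arg (1 - z₀) = 1 - π/2 := by
    have hrepr : (1 : ℂ) - z₀ =
        (↑(2 * Real.sin 1) : ℂ) *
          (Complex.cos (↑(1 - π/2) : ℂ) + Complex.sin (↑(1 - π/2) : ℂ) * Complex.I) := by
      rw [← Complex.ofReal_cos, ← Complex.ofReal_sin]
      apply Complex.ext
      · simp only [Complex.sub_re, Complex.one_re, hre, Complex.mul_re, Complex.add_re,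
          Complex.ofReal_re, Complex.ofReal_im, Complex.mul_im, Complex.add_im, Complex.I_re,
          Complex.I_im]
        rw [show (1:ℝ) - π/2 = -(π/2 - 1) by ring, Real.cos_neg, Real.cos_pi_div_two_sub,
          show (2:ℝ) = 2*1 by norm_num, Real.cos_two_mul]
        nlinarith [Real.sin_sq_add_cos_sq 1]
      · simp only [Complex.sub_im, Complex.one_im, him0, Complex.mul_im, Complex.add_im,
          Complex.ofReal_re, Complex.ofReal_im, Complex.mul_re, Complex.add_re, Complex.I_re,
          Complex.I_im]
        rw [show (1:ℝ) - π/2 = -(π/2 - 1) by ring, Real.sin_neg, Real.sin_pi_div_two_sub,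
          show (2:ℝ) = 2*1 by norm_num, Real.sin_two_mul]
        ring
    rw [hrepr]
    exact Complex.arg_mul_cos_add_sin_mul_I (by linarith)
      ⟨by linarith, by linarith [Real.pi_gt_three]⟩
  have hlim : l.im = π/2 - 1 := by
    rw [hlval, Complex.neg_im, Complex.log_im, harg]; ring
  -- imaginary parts of the partial sums
  have htend2 : Tendsto (fun N : ℕ => (∑ i ∈ Finset.range (N+1), F i).im) atTop
      (𝓝 (π/2 - 1)) := by
    rw [← hlim]
    exact ((Complex.continuous_im.tendsto l).comp hl2).comp (tendsto_add_atTop_nat 1)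
  have key : ∀ N : ℕ, ∑ n ∈ Finset.Icc 1 N, Real.sin n * Real.cos n / n
      = (1/2) * (∑ i ∈ Finset.range (N+1), F i).im := by
    intro N
    rw [sum_Icc_eq_range (fun n : ℕ => Real.sin n * Real.cos n / n) (by simp) N,
      Complex.im_sum, Finset.mul_sum]
    refine Finset.sum_congr rfl fun n _ => ?_
    have : (F n).im = Real.sin (2 * n) / n := by
      rw [hF]
      simp only
      rw [hz₀, ← Complex.exp_nat_mul, show (n:ℂ) * (2 * Complex.I) = ((2*(n:ℝ) : ℝ):ℂ) * Complex.I by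
        push_cast; ring]
      rw [show ((n:ℕ):ℂ) = (((n:ℝ)):ℂ) by push_cast; rfl, Complex.div_ofReal_im]
      rw [Complex.exp_ofReal_mul_I_im]
    rw [this, Real.sin_two_mul]
    ring
  have : Tendsto (fun N : ℕ => (1/2 : ℝ) * (∑ i ∈ Finset.range (N+1), F i).im) atTop
      (𝓝 ((1/2) * (π/2 - 1))) := htend2.const_mul _
  rw [show (π - 2)/4 = (1/2) * (π/2 - 1) by ring]
  simpa only [← key] using this

theorem stmt16 : (Tendsto (fun N : ℕ => ∑ n ∈ Finset.Icc 1 N, Real.sin n * Real.cos n / n) atTop (𝓝 ((π - 2) / 4))) ∧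
    (Tendsto (fun N : ℕ => ∑ n ∈ Finset.Icc 1 N, Real.sin n ^ 2 * Real.cos n / n ^ 2) atTop (𝓝 ((π - 2) / 4))) ∧
    (Tendsto (fun N : ℕ => ∑ n ∈ Finset.Icc 1 N, Real.sin n ^ 3 * Real.cos n / n ^ 3) atTop (𝓝 ((π - 2) / 4))) := by
  refine ⟨part1, tendsto_Icc_of_hasSum (by simp) hs2, tendsto_Icc_of_hasSum (by simp) hs3⟩
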